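/- arXiv:2409.00748 — 2 statements merged into one kernel-verified Lean document; each statement's English description precedes it below -/
import Mathlib

section
/- Let λ₁,…,λ_{d+1} be barycentric coordinates on a nondegenerate d-simplex with vertices a₁,…,a_{d+1}, e_{ij} = a_j − a_i, and define φᵢ = λᵢ + Σ_{j≠i}(λᵢ²λⱼ − λᵢλⱼ²). Then φᵢ(a_k) = δ_{ik} and (e_{kl}·∇)φᵢ(a_k) = 0 for all k ≠ l. That is, φᵢ is the nodal basis function of the TRUNC element associated with the point-value degree of freedom at aᵢ. -/
/-! At a vertex `a_k` the barycentric coordinates take the values `δᵢₖ`, and along the edge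
`e_{kl}` they have the directional derivatives `δᵢₗ - δᵢₖ`. Since `δ² = δ`, every bubble
`λᵢ²λⱼ - λᵢλⱼ²` vanishes at the vertices, and its edge derivative is `δᵢₖδⱼₗ - δᵢₗδⱼₖ`. That
derivative also vanishes for `j = i`, so the sum over `j ≠ i` may be taken over all `j`; it
equals `δᵢₖ - δᵢₗ` and cancels the edge derivative of `λᵢ`. -/

local notation "δ[" i ", " j "]" => (if i = j then (1 : ℝ) else 0)

theorem AffineMap.hasFDerivAt_of_finiteDimensional {𝕜 E F : Type*} [NontriviallyNormedField 𝕜]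
    [CompleteSpace 𝕜] [NormedAddCommGroup E] [NormedSpace 𝕜 E] [FiniteDimensional 𝕜 E]
    [NormedAddCommGroup F] [NormedSpace 𝕜 F] (f : E →ᵃ[𝕜] F) (x : E) :
    HasFDerivAt f (LinearMap.toContinuousLinearMap f.linear) x :=
  (⟨f, f.continuous_of_finiteDimensional⟩ : E →ᴬ[𝕜] F).hasFDerivAt

theorem HasFDerivAt.sq_mul_sub_mul_sq {𝕜 E : Type*} [NontriviallyNormedField 𝕜]
    [NormedAddCommGroup E] [NormedSpace 𝕜 E] {f g : E → 𝕜} {f' g' : E →L[𝕜] 𝕜} {x : E}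
    (hf : HasFDerivAt f f' x) (hg : HasFDerivAt g g' x) :
    HasFDerivAt (fun y => f y ^ 2 * g y - f y * g y ^ 2)
      ((2 * f x * g x - g x ^ 2) • f' + (f x ^ 2 - 2 * f x * g x) • g') x := by
  refine (((hf.pow 2).fun_mul hg).fun_sub (hf.fun_mul (hg.pow 2))).congr_fderiv ?_
  ext v
  simp only [add_apply, sub_apply, smul_apply, smul_eq_mul, nsmul_eq_mul]
  push_cast
  ring

section Barycentric

variable {E ι : Type*} [NormedAddCommGroup E] [NormedSpace ℝ E] [DecidableEq ι]
  {a : ι → E} {lam : ι → E →ᵃ[ℝ] ℝ}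

theorem barycentric_linear_edge (hlam : ∀ i j, lam i (a j) = δ[i, j]) (i k l : ι) :
    (lam i).linear (a l - a k) = δ[i, l] - δ[i, k] := by
  rw [← vsub_eq_sub, (lam i).linearMap_vsub, vsub_eq_sub, hlam, hlam]

theorem bubble_apply_vertex (hlam : ∀ i j, lam i (a j) = δ[i, j]) (i j k : ι) :
    lam i (a k) ^ 2 * lam j (a k) - lam i (a k) * lam j (a k) ^ 2 = 0 := by
  rw [hlam, hlam]
  split_ifs <;> norm_num

variable [FiniteDimensional ℝ E]

theorem fderiv_barycentric_edge (hlam : ∀ i j, lam i (a j) = δ[i, j]) (i k l : ι) :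
    fderiv ℝ (lam i) (a k) (a l - a k) = δ[i, l] - δ[i, k] := by
  rw [((lam i).hasFDerivAt_of_finiteDimensional (a k)).fderiv,
    LinearMap.coe_toContinuousLinearMap', barycentric_linear_edge hlam]

theorem fderiv_bubble_edge (hlam : ∀ i j, lam i (a j) = δ[i, j]) (i j k l : ι) :
    fderiv ℝ (fun y => lam i y ^ 2 * lam j y - lam i y * lam j y ^ 2) (a k) (a l - a k) =
      δ[i, k] * δ[j, l] - δ[i, l] * δ[j, k] := by
  rw [(((lam i).hasFDerivAt_of_finiteDimensional (a k)).sq_mul_sub_mul_sq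
    ((lam j).hasFDerivAt_of_finiteDimensional (a k))).fderiv]
  simp only [add_apply, smul_apply, smul_eq_mul,
    LinearMap.coe_toContinuousLinearMap', barycentric_linear_edge hlam, hlam]
  split_ifs <;> simp_all

end Barycentric

theorem trunc_basis_point_value_general (d : ℕ)
    (a : Fin (d + 1) → EuclideanSpace ℝ (Fin d))
    (lam : Fin (d + 1) → (EuclideanSpace ℝ (Fin d) →ᵃ[ℝ] ℝ))
    (hlam : ∀ i j, lam i (a j) = if i = j then 1 else 0)
    (i : Fin (d + 1))
    (phi : EuclideanSpace ℝ (Fin d) → ℝ)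
    (hphi : phi = fun y => lam i y +
      ∑ j ∈ Finset.univ.erase i, ((lam i y) ^ 2 * lam j y - lam i y * (lam j y) ^ 2)) :
    (∀ k, phi (a k) = if i = k then 1 else 0) ∧
    (∀ k l, k ≠ l → fderiv ℝ phi (a k) (a l - a k) = 0) := by
  subst hphi
  refine ⟨fun k => ?_, fun k l _ => ?_⟩
  · simp only [bubble_apply_vertex hlam, Finset.sum_const_zero, add_zero]
    exact hlam i k
  have hlam_diff : ∀ j, DifferentiableAt ℝ (lam j) (a k) := fun j =>
    ((lam j).hasFDerivAt_of_finiteDimensional (a k)).differentiableAt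
  have hbubble_diff : ∀ j ∈ Finset.univ.erase i, DifferentiableAt ℝ
      (fun y => lam i y ^ 2 * lam j y - lam i y * lam j y ^ 2) (a k) := fun j _ =>
    (((lam i).hasFDerivAt_of_finiteDimensional (a k)).sq_mul_sub_mul_sq
      ((lam j).hasFDerivAt_of_finiteDimensional (a k))).differentiableAt
  have hsum : ∑ j ∈ Finset.univ.erase i, (δ[i, k] * δ[j, l] - δ[i, l] * δ[j, k]) =
      δ[i, k] - δ[i, l] := by
    rw [Finset.sum_erase _ (by ring), Finset.sum_sub_distrib, ← Finset.mul_sum,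
      ← Finset.mul_sum, Finset.sum_ite_eq', Finset.sum_ite_eq']
    simp
  rw [fderiv_fun_add (hlam_diff i) (.fun_sum hbubble_diff), fderiv_fun_sum hbubble_diff,
    add_apply, sum_apply, fderiv_barycentric_edge hlam]
  simp only [fderiv_bubble_edge hlam, hsum]
  ring

/-- `φᵢ = λᵢ + Σ_{j≠i}(λᵢ²λⱼ − λᵢλⱼ²)` is the TRUNC nodal basis function for the
point-value degree of freedom at `aᵢ`: `φᵢ(a_k) = δ_{ik}` and `(e_{kl}·∇)φᵢ(a_k) = 0`. -/
theorem trunc_basis_point_value (d : ℕ)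
    (a : Fin (d + 1) → EuclideanSpace ℝ (Fin d))
    (hInd : AffineIndependent ℝ a)
    (lam : Fin (d + 1) → (EuclideanSpace ℝ (Fin d) →ᵃ[ℝ] ℝ))
    (hlam : ∀ i j, lam i (a j) = if i = j then 1 else 0)
    (i : Fin (d + 1))
    (phi : EuclideanSpace ℝ (Fin d) → ℝ)
    (hphi : phi = fun y => lam i y +
      ∑ j ∈ Finset.univ.erase i, ((lam i y) ^ 2 * lam j y - lam i y * (lam j y) ^ 2)) :
    (∀ k, phi (a k) = if i = k then 1 else 0) ∧
    (∀ k l, k ≠ l → fderiv ℝ phi (a k) (a l - a k) = 0) :=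
  trunc_basis_point_value_general d a lam hlam i phi hphi
end

section
/- Unisolvence of the TRUNC element: Let K be a nondegenerate d-simplex with vertices a₁,…,a_{d+1}, and let Z_K = P₂(K) ⊕ span{λᵢ²λⱼ − λᵢλⱼ² : 1 ≤ i < j ≤ d+1}. If p ∈ Z_K satisfies p(aᵢ) = 0 and (e_{ij}·∇)p(aᵢ) = 0 for all 1 ≤ i ≤ d+1 and all j ≠ i, then p ≡ 0. -/
/-!
The barycentric coordinates sum to one and every affine function is a combination of them, so a
polynomial of degree at most two is a quadratic form `∑ B i j λᵢ λⱼ` in the barycentric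
coordinates. On the edge from `aₜ` to `aₛ` only `λₜ = 1 - h` and `λₛ = h` survive, and `p`
restricts there to `B t t (1 - h)² + (B t s + B s t) (1 - h) h + B s s h² ± c (1 - h) h (1 - 2h)`,
whose value and slope at `h = 0` are `B t t` and `B t s + B s t ± c - 2 B t t`. The degrees of
freedom therefore force `B t t = 0` and `B t s + B s t ± c = 0` for both orientations of every
edge: `c = 0` and `B` is alternating, so `p` vanishes identically.
-/

open Finset AffineMap

open MvPolynomial in
theorem MvPolynomial.monomial_one_eq_of_degree_le_two {σ R : Type*} [CommSemiring R] (s : σ →₀ ℕ)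
    (hs : (s.sum fun _ e => e) ≤ 2) :
    monomial s (1 : R) = 1 ∨ (∃ m, monomial s (1 : R) = X m) ∨
      ∃ m m', monomial s (1 : R) = X m * X m' := by
  classical
  have hcard : Multiset.card (Finsupp.toMultiset s) ≤ 2 := by rwa [Finsupp.card_toMultiset]
  interval_cases h : Multiset.card (Finsupp.toMultiset s)
  · rw [Multiset.card_eq_zero, Finsupp.toMultiset_eq_iff] at h
    simp [h]
  · obtain ⟨m, hm⟩ := Multiset.card_eq_one.mp h
    rw [Finsupp.toMultiset_eq_iff] at hm
    exact Or.inr (Or.inl ⟨m, by simp [hm, X]⟩)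
  · obtain ⟨m, m', hm⟩ := Multiset.card_eq_two.mp h
    rw [Finsupp.toMultiset_eq_iff, Multiset.insert_eq_cons, ← Multiset.singleton_add] at hm
    exact Or.inr (Or.inr ⟨m, m', by rw [hm, Multiset.toFinsupp_add]; simp [X, monomial_mul]⟩)

section QuadForm

variable {ι R : Type*} [Fintype ι] [CommRing R]

def quadForm (B : ι → ι → R) (μ : ι → R) : R :=
  ∑ i, ∑ j, B i j * (μ i * μ j)

theorem quadForm_eq_single {B : ι → ι → R} {μ : ι → R} {t : ι}
    (hμ : ∀ k, k ≠ t → μ k = 0) : quadForm B μ = B t t * μ t ^ 2 := by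
  rw [quadForm, Fintype.sum_eq_single t fun i hi => by simp [hμ i hi],
    Fintype.sum_eq_single t fun j hj => by simp [hμ j hj]]
  ring

theorem quadForm_eq_pair {B : ι → ι → R} {μ : ι → R} {t s : ι} (hts : t ≠ s)
    (hμ : ∀ k, k ≠ t → k ≠ s → μ k = 0) :
    quadForm B μ = B t t * μ t ^ 2 + (B t s + B s t) * (μ t * μ s) + B s s * μ s ^ 2 := by
  rw [quadForm, Fintype.sum_eq_add t s hts fun i hi => by simp [hμ i hi.1 hi.2],
    Fintype.sum_eq_add t s hts fun j hj => by simp [hμ j hj.1 hj.2],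
    Fintype.sum_eq_add t s hts fun j hj => by simp [hμ j hj.1 hj.2]]
  ring

end QuadForm

theorem quadForm_eq_zero_of_add_swap_eq_zero {ι R : Type*} [Fintype ι] [Field R] [CharZero R]
    {B : ι → ι → R} (hB : ∀ i j, B i j + B j i = 0) (μ : ι → R) : quadForm B μ = 0 := by
  have h2 : 2 * quadForm B μ = 0 := calc
    2 * quadForm B μ = quadForm B μ + quadForm (fun i j => B j i) μ := by
      rw [two_mul, quadForm, quadForm, sum_comm (f := fun i j => B j i * (μ i * μ j))]
      ac_rfl
    _ = quadForm (fun i j => B i j + B j i) μ := by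
      simp only [quadForm, ← sum_add_distrib, add_mul]
    _ = 0 := by simp [quadForm, hB]
  simpa using h2

section Barycentric

variable {ι k V P : Type*} [Fintype ι] [CommRing k] [AddCommGroup V] [Module k V]
  [AddTorsor V P] {a : ι → P} {lam : ι → P →ᵃ[k] k}

variable (lam) in
def barycentricQuadratics : Submodule k (P → k) :=
  Submodule.span k (Set.range fun ij : ι × ι => fun x => lam ij.1 x * lam ij.2 x)

theorem exists_quadForm_of_mem_barycentricQuadratics {f : P → k}
    (hf : f ∈ barycentricQuadratics lam) :
    ∃ B : ι → ι → k, ∀ x, f x = quadForm B (fun i => lam i x) := by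
  obtain ⟨B, rfl⟩ := Submodule.mem_span_range_iff_exists_fun k |>.mp hf
  refine ⟨fun i j => B (i, j), fun x => ?_⟩
  simp [quadForm, Fintype.sum_prod_type]

variable [DecidableEq ι] (hlam : ∀ i j, lam i (a j) = if i = j then 1 else 0)
include hlam

theorem lam_affineCombination {w : ι → k} (hw : ∑ i, w i = 1) (i : ι) :
    lam i (univ.affineCombination k a w) = w i := by
  rw [univ.map_affineCombination a w hw, univ.affineCombination_eq_linear_combination _ _ hw]
  simp [hlam]

variable (hspan : affineSpan k (Set.range a) = ⊤)
include hspan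

theorem sum_lam_eq_one_and_eq_affineCombination (x : P) :
    ∑ i, lam i x = 1 ∧ x = univ.affineCombination k a (fun i => lam i x) := by
  obtain ⟨w, hw, rfl⟩ :=
    eq_affineCombination_of_mem_affineSpan_of_fintype (hspan ▸ AffineSubspace.mem_top k V x)
  simp_rw [lam_affineCombination hlam hw]
  exact ⟨hw, trivial⟩

theorem AffineMap.apply_eq_sum_apply_mul_lam (f : P →ᵃ[k] k) (x : P) :
    f x = ∑ i, f (a i) * lam i x := by
  obtain ⟨hsum, hx⟩ := sum_lam_eq_one_and_eq_affineCombination hlam hspan x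
  conv_lhs => rw [hx]
  rw [univ.map_affineCombination _ _ hsum, univ.affineCombination_eq_linear_combination _ _ hsum]
  simp [mul_comm]

theorem mul_mem_barycentricQuadratics (f g : P →ᵃ[k] k) :
    (fun x => f x * g x) ∈ barycentricQuadratics lam := by
  have hfg : (fun x => f x * g x) =
      ∑ i, ∑ j, (f (a i) * g (a j)) • fun x => lam i x * lam j x := by
    ext x
    rw [f.apply_eq_sum_apply_mul_lam hlam hspan, g.apply_eq_sum_apply_mul_lam hlam hspan,
      sum_mul_sum]
    simp [mul_mul_mul_comm]
  rw [hfg]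
  exact Submodule.sum_mem _ fun i _ => Submodule.sum_mem _ fun j _ =>
    Submodule.smul_mem _ _ (Submodule.subset_span ⟨(i, j), rfl⟩)

open MvPolynomial in
theorem eval_mem_barycentricQuadratics {σ : Type*} (y : σ → P →ᵃ[k] k)
    {q : MvPolynomial σ k} (hq : q.totalDegree ≤ 2) :
    (fun x => eval (fun m => y m x) q) ∈ barycentricQuadratics lam := by
  have hq_sum : (fun x => eval (fun m => y m x) q) =
      ∑ s ∈ q.support, q.coeff s • fun x => eval (fun m => y m x) (monomial s 1) := by
    ext x
    rw [eval_eq]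
    simp [eval_monomial, Finsupp.prod]
  rw [hq_sum]
  refine Submodule.sum_mem _ fun s hs => Submodule.smul_mem _ _ ?_
  have hone := mul_mem_barycentricQuadratics hlam hspan (.const k P 1) (.const k P 1)
  rcases monomial_one_eq_of_degree_le_two (R := k) s ((le_totalDegree hs).trans hq)
    with h | ⟨m, h⟩ | ⟨m, m', h⟩ <;> rw [h]
  · simpa using hone
  · simpa using mul_mem_barycentricQuadratics hlam hspan (y m) (.const k P 1)
  · simpa using mul_mem_barycentricQuadratics hlam hspan (y m) (y m')

end Barycentric

section TruncCubic

variable {ι R : Type*} [Fintype ι] [LinearOrder ι] [CommRing R]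

def truncCubic (c : ι → ι → R) (μ : ι → R) : R :=
  ∑ i, ∑ j, if i < j then c i j * (μ i ^ 2 * μ j - μ i * μ j ^ 2) else 0

def edgeCoeff (c : ι → ι → R) (t s : ι) : R :=
  (if t < s then c t s else 0) - (if s < t then c s t else 0)

theorem truncCubic_eq_zero_of_single {c : ι → ι → R} {μ : ι → R} {t : ι}
    (hμ : ∀ k, k ≠ t → μ k = 0) : truncCubic c μ = 0 := by
  refine sum_eq_zero fun i _ => sum_eq_zero fun j _ => ?_
  split_ifs with hij
  · rcases eq_or_ne i t with rfl | hi
    · simp [hμ j hij.ne']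
    · simp [hμ i hi]
  · rfl

theorem truncCubic_eq_pair {c : ι → ι → R} {μ : ι → R} {t s : ι} (hts : t ≠ s)
    (hμ : ∀ k, k ≠ t → k ≠ s → μ k = 0) :
    truncCubic c μ = edgeCoeff c t s * (μ t * μ s * (μ t - μ s)) := by
  rw [truncCubic, Fintype.sum_eq_add t s hts fun i hi => by simp [hμ i hi.1 hi.2],
    Fintype.sum_eq_add t s hts fun j hj => by simp [hμ j hj.1 hj.2],
    Fintype.sum_eq_add t s hts fun j hj => by simp [hμ j hj.1 hj.2]]
  simp only [lt_irrefl, if_false, edgeCoeff]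
  split_ifs <;> ring

end TruncCubic

theorem quadForm_add_truncCubic_eq_zero {ι R : Type*} [Fintype ι] [LinearOrder ι] [Field R]
    [CharZero R] {B c : ι → ι → R}
    (hdiag : ∀ t, B t t = 0) (hedge : ∀ t s, t ≠ s → B t s + B s t + edgeCoeff c t s = 0)
    (μ : ι → R) : quadForm B μ + truncCubic c μ = 0 := by
  have hc : ∀ i j, i < j → c i j = 0 := by
    intro i j hij
    have h₁ := hedge i j hij.ne
    have h₂ := hedge j i hij.ne'
    simp only [edgeCoeff, if_pos hij, if_neg hij.not_gt] at h₁ h₂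
    linear_combination (h₁ - h₂) / 2
  have hB : ∀ i j, B i j + B j i = 0 := by
    intro i j
    rcases lt_trichotomy i j with hij | rfl | hij
    · simpa [edgeCoeff, hij, hij.not_gt, hc i j hij] using hedge i j hij.ne
    · simp [hdiag]
    · simpa [edgeCoeff, hij, hij.not_gt, hc j i hij] using hedge i j hij.ne'
  have hcubic : truncCubic c μ = 0 :=
    sum_eq_zero fun i _ => sum_eq_zero fun j _ => by split_ifs with hij <;> simp [hc i j, hij]
  rw [hcubic, add_zero, quadForm_eq_zero_of_add_swap_eq_zero hB]

section Edge

variable {ι E : Type*} [Fintype ι] [LinearOrder ι] [NormedAddCommGroup E] [NormedSpace ℝ E]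
  {a : ι → E} {lam : ι → E →ᵃ[ℝ] ℝ} {B c : ι → ι → ℝ} {p : E → ℝ}

def edgeCubic (α β γ σ h : ℝ) : ℝ :=
  α * (1 - h) ^ 2 + β * ((1 - h) * h) + γ * h ^ 2 + σ * ((1 - h) * h * ((1 - h) - h))

open Polynomial in
theorem hasDerivAt_edgeCubic (α β γ σ : ℝ) :
    HasDerivAt (edgeCubic α β γ σ) (β + σ - 2 * α) 0 := by
  have h := (C α * (1 - X) ^ 2 + C β * ((1 - X) * X) + C γ * X ^ 2 +
    C σ * ((1 - X) * X * ((1 - X) - X)) : ℝ[X]).hasDerivAt 0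
  simp only [eval_add, eval_mul, eval_pow, eval_sub, eval_one, eval_X, eval_C] at h
  refine h.congr_deriv ?_
  simp [derivative_mul, derivative_pow]
  ring

theorem differentiable_of_eq_quadForm_add_truncCubic [FiniteDimensional ℝ E]
    (hp : ∀ x, p x = quadForm B (fun k => lam k x) + truncCubic c (fun k => lam k x)) :
    Differentiable ℝ p := by
  have hlam : ∀ k, Differentiable ℝ (lam k) := fun k =>
    (⟨lam k, (lam k).continuous_of_finiteDimensional⟩ : E →ᴬ[ℝ] ℝ).contDiff (n := 1).differentiable
      one_ne_zero
  rw [funext hp]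
  simp only [quadForm, truncCubic, ← ite_zero_mul]
  fun_prop

variable [DecidableEq ι] (hlam : ∀ i j, lam i (a j) = if i = j then 1 else 0)
  (hp : ∀ x, p x = quadForm B (fun k => lam k x) + truncCubic c (fun k => lam k x))
include hlam hp

theorem apply_vertex_eq_diag (t : ι) : p (a t) = B t t := by
  have hμ : ∀ k, k ≠ t → lam k (a t) = 0 := fun k hk => by simp [hlam, hk]
  rw [hp, quadForm_eq_single hμ, truncCubic_eq_zero_of_single hμ]
  simp [hlam]

theorem apply_lineMap_eq_edgeCubic {t s : ι} (hts : t ≠ s) (h : ℝ) :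
    p (lineMap (a t) (a s) h) = edgeCubic (B t t) (B t s + B s t) (B s s) (edgeCoeff c t s) h := by
  have hμ : ∀ k, lam k (lineMap (a t) (a s) h) = (1 - h) * lam k (a t) + h * lam k (a s) := by
    intro k; rw [apply_lineMap, lineMap_apply_ring]
  rw [hp, quadForm_eq_pair hts fun k hkt hks => by simp [hμ, hlam, hkt, hks],
    truncCubic_eq_pair hts fun k hkt hks => by simp [hμ, hlam, hkt, hks]]
  simp [edgeCubic, hμ, hlam, hts, hts.symm]

theorem fderiv_apply_vertex_sub_eq [FiniteDimensional ℝ E] {t s : ι} (hts : t ≠ s) :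
    fderiv ℝ p (a t) (a s - a t) = B t s + B s t + edgeCoeff c t s - 2 * B t t := by
  have hchain : HasDerivAt (fun h : ℝ => p (lineMap (a t) (a s) h))
      (fderiv ℝ p (a t) (a s - a t)) 0 :=
    (differentiable_of_eq_quadForm_add_truncCubic hp _).hasFDerivAt.comp_hasDerivAt_of_eq (0 : ℝ)
      hasDerivAt_lineMap (by simp)
  rw [funext (apply_lineMap_eq_edgeCubic hlam hp hts)] at hchain
  exact hchain.unique (hasDerivAt_edgeCubic _ _ _ _)

end Edge

theorem trunc_unisolvence_general (d : ℕ)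
    (a : Fin (d + 1) → EuclideanSpace ℝ (Fin d))
    (hInd : AffineIndependent ℝ a)
    (lam : Fin (d + 1) → (EuclideanSpace ℝ (Fin d) →ᵃ[ℝ] ℝ))
    (hlam : ∀ i j, lam i (a j) = if i = j then 1 else 0)
    (p : EuclideanSpace ℝ (Fin d) → ℝ)
    (hp : ∃ q : MvPolynomial (Fin d) ℝ, q.totalDegree ≤ 2 ∧
      ∃ c : Fin (d + 1) → Fin (d + 1) → ℝ, ∀ x, p x =
        MvPolynomial.eval (fun m => x m) q +
        ∑ i, ∑ j, if i < j then
          c i j * ((lam i x) ^ 2 * lam j x - lam i x * (lam j x) ^ 2) else 0)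
    (hval : ∀ i, p (a i) = 0)
    (hder : ∀ i j, j ≠ i → fderiv ℝ p (a i) (a j - a i) = 0) :
    ∀ x, p x = 0 := by
  obtain ⟨q, hq, c, hpq⟩ := hp
  have hspan : affineSpan ℝ (Set.range a) = ⊤ :=
    hInd.affineSpan_eq_top_iff_card_eq_finrank_add_one.mpr (by simp)
  obtain ⟨B, hB⟩ := exists_quadForm_of_mem_barycentricQuadratics <|
    eval_mem_barycentricQuadratics hlam hspan
      (fun m => (EuclideanSpace.proj m).toLinearMap.toAffineMap) hq
  have hpB : ∀ x, p x = quadForm B (fun k => lam k x) + truncCubic c (fun k => lam k x) :=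
    fun x => by rw [hpq, ← hB x]; rfl
  have hdiag : ∀ t, B t t = 0 := fun t => (apply_vertex_eq_diag hlam hpB t).symm.trans (hval t)
  have hedge : ∀ t s, t ≠ s → B t s + B s t + edgeCoeff c t s = 0 := fun t s hts => by
    simpa [hder t s hts.symm, hdiag] using (fderiv_apply_vertex_sub_eq hlam hpB hts).symm
  exact fun x => (hpB x).trans (quadForm_add_truncCubic_eq_zero hdiag hedge _)

/-- Unisolvence of the TRUNC element: if `p ∈ Z_K = P₂(K) ⊕ span{λᵢ²λⱼ − λᵢλⱼ² : i < j}`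
vanishes together with all edge-directional derivatives `(e_{ij}·∇)p(aᵢ)` at every vertex,
then `p ≡ 0`. -/
theorem trunc_unisolvence (d : ℕ) (hd : 2 ≤ d)
    (a : Fin (d + 1) → EuclideanSpace ℝ (Fin d))
    (hInd : AffineIndependent ℝ a)
    (lam : Fin (d + 1) → (EuclideanSpace ℝ (Fin d) →ᵃ[ℝ] ℝ))
    (hlam : ∀ i j, lam i (a j) = if i = j then 1 else 0)
    (p : EuclideanSpace ℝ (Fin d) → ℝ)
    (hp : ∃ q : MvPolynomial (Fin d) ℝ, q.totalDegree ≤ 2 ∧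
      ∃ c : Fin (d + 1) → Fin (d + 1) → ℝ, ∀ x, p x =
        MvPolynomial.eval (fun m => x m) q +
        ∑ i, ∑ j, if i < j then
          c i j * ((lam i x) ^ 2 * lam j x - lam i x * (lam j x) ^ 2) else 0)
    (hval : ∀ i, p (a i) = 0)
    (hder : ∀ i j, j ≠ i → fderiv ℝ p (a i) (a j - a i) = 0) :
    ∀ x, p x = 0 :=
  trunc_unisolvence_general d a hInd lam hlam p hp hval hder
end
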